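/- Let X, Y, Z be discrete random variables with finite domains, observed on n samples, and suppose the empirical conditional mutual information satisfies Î(X;Y|Z) = 0. Then SCI_f(X;Y|Z) := max{ S_f(X|Z) − S_f(X|Z,Y), S_f(Y|Z) − S_f(Y|Z,X) } ≤ 0, where S_f(X|Z) = n·Ĥ(X|Z) + R_f(X|Z) with Ĥ the empirical (plug-in) conditional entropy and R_f the fNML regret. -/

import Mathlib

open Finset

section Aux

/-- count of value `a` in sample `x` -/
def cnt {n : ℕ} {α : Type*} [Fintype α] [DecidableEq α] (x : Fin n → α) (a : α) : ℕ :=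
  #(univ.filter fun i => x i = a)

variable {α : Type*} [Fintype α] [DecidableEq α]

lemma cnt_sum {n : ℕ} (x : Fin n → α) : ∑ a, cnt x a = n := by
  classical
  have h := card_eq_sum_card_fiberwise (f := x) (s := univ) (t := univ) (fun i _ => mem_univ (x i))
  simpa [cnt] using h.symm

lemma cnt_cons {n : ℕ} (a : α) (y : Fin n → α) (b : α) :
    cnt (Fin.cons a y) b = (if a = b then 1 else 0) + cnt y b := by
  classical
  simp only [cnt, card_filter, Fin.sum_univ_succ, Fin.cons_zero, Fin.cons_succ]

lemma fiber_mul_factorial : ∀ (n : ℕ) (v : α → ℕ), (∑ a, v a = n) →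
    #(univ.filter fun x : Fin n → α => cnt x = v) * ∏ a, (v a).factorial = n.factorial := by
  intro n
  induction n with
  | zero =>
    intro v hv
    have hv0 : v = 0 := by
      funext a
      exact (Finset.sum_eq_zero_iff.mp hv) a (mem_univ a)
    subst hv0
    have : (univ.filter fun x : Fin 0 → α => cnt x = 0) = univ := by
      apply filter_true_of_mem
      intro x _
      funext a
      simp [cnt]
    rw [this]
    simp [Finset.card_univ]
  | succ n ih =>
    intro v hv
    classical
    have key : ∀ (a : α) (y : Fin n → α),
        (cnt (Fin.cons a y) = v) ↔ (v a ≠ 0 ∧ cnt y = Function.update v a (v a - 1)) := by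
      intro a y
      constructor
      · intro h
        have ha : (1 : ℕ) + cnt y a = v a := by
          have := congrFun h a; rwa [cnt_cons, if_pos rfl] at this
        refine ⟨by omega, funext fun b => ?_⟩
        rcases eq_or_ne b a with rfl | hb
        · rw [Function.update_self]; omega
        · have := congrFun h b
          rw [cnt_cons, if_neg (Ne.symm hb), zero_add] at this
          rw [Function.update_of_ne hb, this]
      · rintro ⟨ha, h⟩
        funext b
        rw [cnt_cons]
        rcases eq_or_ne b a with rfl | hb
        · have := congrFun h b
          rw [Function.update_self] at this
          rw [if_pos rfl, this]; omega
        · have := congrFun h b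
          rw [Function.update_of_ne hb] at this
          rw [if_neg (Ne.symm hb), zero_add, this]
    have hcard : #(univ.filter fun x : Fin (n+1) → α => cnt x = v)
        = ∑ a : α, if v a ≠ 0 then
            #(univ.filter fun y : Fin n → α => cnt y = Function.update v a (v a - 1)) else 0 := by
      rw [card_filter]
      rw [← (Fin.consEquiv (fun _ : Fin (n+1) => α)).sum_comp
        (fun x => if cnt x = v then 1 else 0)]
      rw [Fintype.sum_prod_type]
      refine Finset.sum_congr rfl fun a _ => ?_
      rcases eq_or_ne (v a) 0 with h0 | h0
      · rw [if_neg (by simp [h0])]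
        apply Finset.sum_eq_zero
        intro y _
        rw [if_neg]
        rw [show ((Fin.consEquiv fun _ : Fin (n+1) => α) (a, y)) = Fin.cons a y from rfl]
        simp only [key]
        tauto
      · rw [if_pos h0, card_filter]
        refine Finset.sum_congr rfl fun y _ => ?_
        rw [show ((Fin.consEquiv fun _ : Fin (n+1) => α) (a, y)) = Fin.cons a y from rfl]
        simp only [key, h0, ne_eq, not_false_eq_true, true_and]
    rw [hcard, Finset.sum_mul]
    have hterm : ∀ a : α, (if v a ≠ 0 then
          #(univ.filter fun y : Fin n → α => cnt y = Function.update v a (v a - 1)) else 0)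
          * ∏ b, (v b).factorial = (if v a ≠ 0 then v a else 0) * n.factorial := by
      intro a
      rcases eq_or_ne (v a) 0 with h0 | h0
      · simp [h0]
      · rw [if_pos h0, if_pos h0]
        have hsum : ∑ b, Function.update v a (v a - 1) b = n := by
          rw [Finset.sum_update_of_mem (mem_univ a), Finset.sdiff_singleton_eq_erase]
          have := hv
          rw [← Finset.sum_erase_add _ _ (mem_univ a)] at this
          omega
        have hih := ih (Function.update v a (v a - 1)) hsum
        have hprod : ∏ b, (v b).factorial
            = v a * ∏ b, (Function.update v a (v a - 1) b).factorial := by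
          rw [← Finset.mul_prod_erase univ (fun b => (v b).factorial) (mem_univ a),
            ← Finset.mul_prod_erase univ (fun b => (Function.update v a (v a - 1) b).factorial)
              (mem_univ a), Function.update_self, ← mul_assoc,
            ← Nat.mul_factorial_pred h0]
          rw [mul_assoc, mul_assoc]
          congr 1
          congr 1
          exact Finset.prod_congr rfl fun b hb =>
            by rw [Function.update_of_ne (Finset.ne_of_mem_erase hb)]
        rw [hprod, ← mul_assoc, mul_comm _ (v a), mul_assoc, hih]
    calc ∑ a : α, (if v a ≠ 0 then
          #(univ.filter fun y : Fin n → α => cnt y = Function.update v a (v a - 1)) else 0)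
          * ∏ b, (v b).factorial
        = ∑ a : α, (if v a ≠ 0 then v a else 0) * n.factorial := by
          exact Finset.sum_congr rfl fun a _ => hterm a
      _ = (∑ a : α, v a) * n.factorial := by
          rw [← Finset.sum_mul]
          congr 1
          exact Finset.sum_congr rfl fun a _ => by split <;> omega
      _ = (n+1).factorial := by rw [hv, Nat.factorial_succ]

lemma ml_ineq {ι : Type*} [Fintype ι] [DecidableEq ι] (p : ι → ℝ) (hp : ∀ i, 0 ≤ p i)
    (hp1 : ∑ i, p i ≤ 1) (u : ι → ℕ) (a : ℕ) (ha : ∑ i, u i = a) :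
    ∏ i, p i ^ u i ≤ ∏ i, ((u i : ℝ) / a) ^ u i := by
  rcases Nat.eq_zero_or_pos a with rfl | hapos
  · have hu : ∀ i, u i = 0 := fun i => Finset.sum_eq_zero_iff.mp ha i (mem_univ i)
    simp [hu]
  · set s := univ.filter (fun i => u i ≠ 0) with hs
    have hus : ∑ i ∈ s, u i = a := by
      rw [← ha]
      exact Finset.sum_filter_ne_zero univ
    have hane : (a : ℝ) ≠ 0 := Nat.cast_ne_zero.mpr hapos.ne'
    have hredl : ∏ i, p i ^ u i = ∏ i ∈ s, p i ^ u i := by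
      symm
      apply Finset.prod_subset (Finset.filter_subset _ _)
      intro i _ hi
      have : u i = 0 := by
        by_contra h0
        exact hi (Finset.mem_filter.mpr ⟨mem_univ i, h0⟩)
      simp [this]
    have hredr : ∏ i, ((u i : ℝ) / a) ^ u i = ∏ i ∈ s, ((u i : ℝ) / a) ^ u i := by
      symm
      apply Finset.prod_subset (Finset.filter_subset _ _)
      intro i _ hi
      have : u i = 0 := by
        by_contra h0
        exact hi (Finset.mem_filter.mpr ⟨mem_univ i, h0⟩)
      simp [this]
    rw [hredl, hredr]
    have hu0 : ∀ i ∈ s, u i ≠ 0 := fun i hi => (Finset.mem_filter.mp hi).2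
    set w : ι → ℝ := fun i => (u i : ℝ) / a with hw
    set z : ι → ℝ := fun i => a * p i / u i with hz
    have hwnn : ∀ i ∈ s, 0 ≤ w i := fun i _ => by positivity
    have hw1 : ∑ i ∈ s, w i = 1 := by
      rw [hw]
      rw [← Finset.sum_div]
      rw [show ∑ i ∈ s, (u i : ℝ) = ((∑ i ∈ s, u i : ℕ) : ℝ) by push_cast; ring, hus]
      exact div_self hane
    have hznn : ∀ i ∈ s, 0 ≤ z i := fun i _ => by
      have := hp i
      positivity
    have hgm := Real.geom_mean_le_arith_mean_weighted s w z hwnn hw1 hznn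
    have hsum1 : ∑ i ∈ s, w i * z i ≤ 1 := by
      calc ∑ i ∈ s, w i * z i = ∑ i ∈ s, p i := by
            refine Finset.sum_congr rfl fun i hi => ?_
            have hui : ((u i : ℝ)) ≠ 0 := Nat.cast_ne_zero.mpr (hu0 i hi)
            simp only [hw, hz]; field_simp
        _ ≤ ∑ i, p i := Finset.sum_le_sum_of_subset_of_nonneg (Finset.filter_subset _ _)
            (fun i _ _ => hp i)
        _ ≤ 1 := hp1
    have hgm1 : ∏ i ∈ s, z i ^ w i ≤ 1 := le_trans hgm hsum1
    have hgmnn : 0 ≤ ∏ i ∈ s, z i ^ w i :=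
      Finset.prod_nonneg fun i hi => Real.rpow_nonneg (hznn i hi) _
    have hpowa : (∏ i ∈ s, z i ^ w i) ^ a ≤ 1 := pow_le_one₀ hgmnn hgm1
    have hexp : (∏ i ∈ s, z i ^ w i) ^ a = ∏ i ∈ s, z i ^ u i := by
      rw [← Finset.prod_pow]
      refine Finset.prod_congr rfl fun i hi => ?_
      rw [← Real.rpow_natCast (z i ^ w i) a, ← Real.rpow_mul (hznn i hi)]
      rw [show w i * a = (u i : ℝ) by simp only [hw]; field_simp]
      rw [Real.rpow_natCast]
    rw [hexp] at hpowa
    have key : ∏ i ∈ s, p i ^ u i = (∏ i ∈ s, z i ^ u i) * ∏ i ∈ s, ((u i : ℝ) / a) ^ u i := by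
      rw [← Finset.prod_mul_distrib]
      refine Finset.prod_congr rfl fun i hi => ?_
      rw [← mul_pow]
      congr 1
      have hui : ((u i : ℝ)) ≠ 0 := Nat.cast_ne_zero.mpr (hu0 i hi)
      simp only [hz]; field_simp
    rw [key]
    have hrnn : 0 ≤ ∏ i ∈ s, ((u i : ℝ) / a) ^ u i :=
      Finset.prod_nonneg fun i _ => pow_nonneg (by positivity) _
    calc (∏ i ∈ s, z i ^ u i) * ∏ i ∈ s, ((u i : ℝ) / a) ^ u i
        ≤ 1 * ∏ i ∈ s, ((u i : ℝ) / a) ^ u i := mul_le_mul_of_nonneg_right hpowa hrnn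
      _ = ∏ i ∈ s, ((u i : ℝ) / a) ^ u i := one_mul _

end Aux

/-- Multinomial normalized maximum likelihood (NML) regret `C_k^n`. -/
noncomputable def regret (k n : ℕ) : ℝ :=
  ∑ v ∈ Finset.Nat.antidiagonalTuple k n,
    ((n.factorial : ℝ) / ∏ j, ((v j).factorial : ℝ)) * ∏ j, ((v j : ℝ) / n) ^ (v j)

/-- fNML regret `R_f(X | Z)` of a variable with domain size `k` given the observed
conditioning data `Z` on `n` samples: `∑_z log C_k^{n_z}`. -/
noncomputable def Rf (k : ℕ) {n : ℕ} {α : Type*} [Fintype α] [DecidableEq α]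
    (Z : Fin n → α) : ℝ :=
  ∑ z : α, Real.log (regret k (Finset.univ.filter (fun i => Z i = z)).card)

/-- Empirical (plug-in) Shannon entropy of the sample `W`, in nats
(with the convention `0 · log 0 = 0`). -/
noncomputable def empEnt {n : ℕ} {α : Type*} [Fintype α] [DecidableEq α]
    (W : Fin n → α) : ℝ :=
  -∑ a : α, (((Finset.univ.filter (fun i => W i = a)).card : ℝ) / n) *
      Real.log (((Finset.univ.filter (fun i => W i = a)).card : ℝ) / n)

/-- Empirical conditional entropy `Ĥ(X | Z) = Ĥ(X,Z) - Ĥ(Z)`. -/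
noncomputable def empCondEnt {n : ℕ} {α β : Type*} [Fintype α] [DecidableEq α]
    [Fintype β] [DecidableEq β] (X : Fin n → α) (Z : Fin n → β) : ℝ :=
  empEnt (fun i => (X i, Z i)) - empEnt Z

/-- fNML conditional stochastic complexity `S_f(X|Z) = n·Ĥ(X|Z) + R_f(X|Z)`. -/
noncomputable def Sf {n : ℕ} {α β : Type*} [Fintype α] [DecidableEq α]
    [Fintype β] [DecidableEq β] (X : Fin n → α) (Z : Fin n → β) : ℝ :=
  n * empCondEnt X Z + Rf (Fintype.card α) Z

section Regret

lemma regret_eq_seq (k n : ℕ) :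
    regret k n = ∑ x : Fin n → Fin k, ∏ j, ((cnt x j : ℝ) / n) ^ (cnt x j) := by
  classical
  rw [← Finset.sum_fiberwise_of_maps_to
    (g := fun x : Fin n → Fin k => cnt x)
    (t := Finset.Nat.antidiagonalTuple k n)
    (fun x _ => Finset.Nat.mem_antidiagonalTuple.mpr (cnt_sum x))]
  unfold regret
  refine Finset.sum_congr rfl fun v hv => ?_
  have hvs : ∑ j, v j = n := Finset.Nat.mem_antidiagonalTuple.mp hv
  have hinner : ∑ x ∈ univ.filter (fun x : Fin n → Fin k => cnt x = v),
      ∏ j, ((cnt x j : ℝ) / n) ^ (cnt x j)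
      = #(univ.filter fun x : Fin n → Fin k => cnt x = v) * ∏ j, ((v j : ℝ) / n) ^ (v j) := by
    rw [Finset.sum_congr rfl (fun x hx => ?_), Finset.sum_const, nsmul_eq_mul]
    have hx' : cnt x = v := (Finset.mem_filter.mp hx).2
    rw [hx']
  rw [hinner]
  congr 1
  have h := fiber_mul_factorial n v hvs
  have hne : (∏ j, ((v j).factorial : ℝ)) ≠ 0 :=
    Finset.prod_ne_zero_iff.mpr fun j _ => Nat.cast_ne_zero.mpr (Nat.factorial_ne_zero _)
  field_simp
  rw [← Nat.cast_prod, ← Nat.cast_mul]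
  exact_mod_cast (congrArg (Nat.cast (R := ℝ)) ((mul_comm _ _).trans h)).symm

lemma regret_zero (k : ℕ) : regret k 0 = 1 := by
  rw [regret, Finset.Nat.antidiagonalTuple_zero_right]
  simp

lemma one_le_regret {k : ℕ} (hk : 1 ≤ k) (n : ℕ) : 1 ≤ regret k n := by
  rcases Nat.eq_zero_or_pos n with rfl | hn
  · rw [regret_zero]
  rw [regret_eq_seq]
  set x0 : Fin n → Fin k := fun _ => ⟨0, hk⟩ with hx0
  have hterm : ∏ j, ((cnt x0 j : ℝ) / n) ^ (cnt x0 j) = 1 := by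
    apply Finset.prod_eq_one
    intro j _
    rcases eq_or_ne j ⟨0, hk⟩ with rfl | hj
    · have : cnt x0 ⟨0, hk⟩ = n := by simp [cnt, hx0]
      rw [this, div_self (by positivity : (n:ℝ) ≠ 0), one_pow]
    · have : cnt x0 j = 0 := by simp [cnt, hx0, Ne.symm hj]
      simp [this]
  calc (1:ℝ) = ∏ j, ((cnt x0 j : ℝ) / n) ^ (cnt x0 j) := hterm.symm
    _ ≤ ∑ x : Fin n → Fin k, ∏ j, ((cnt x j : ℝ) / n) ^ (cnt x j) :=
        Finset.single_le_sum (f := fun x : Fin n → Fin k => ∏ j, ((cnt x j : ℝ) / n) ^ (cnt x j))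
          (fun x _ => Finset.prod_nonneg fun j _ => by positivity) (mem_univ x0)

lemma regret_superadd (k a b : ℕ) : regret k (a + b) ≤ regret k a * regret k b := by
  rcases Nat.eq_zero_or_pos a with rfl | hapos
  · simp [regret_zero]
  rcases Nat.eq_zero_or_pos b with rfl | hbpos
  · simp [regret_zero]
  have hn : 0 < a + b := by omega
  rw [regret_eq_seq, regret_eq_seq, regret_eq_seq, Finset.sum_mul_sum]
  rw [← Fintype.sum_prod_type']
  set e : ((Fin a → Fin k) × (Fin b → Fin k)) ≃ (Fin (a+b) → Fin k) :=
    (Equiv.sumArrowEquivProdArrow (Fin a) (Fin b) (Fin k)).symm.trans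
      (Equiv.arrowCongr finSumFinEquiv (Equiv.refl (Fin k))) with he
  rw [← e.sum_comp (fun x => ∏ j, ((cnt x j : ℝ) / ((a+b : ℕ) : ℝ)) ^ (cnt x j))]
  apply Finset.sum_le_sum
  rintro ⟨x1, x2⟩ -
  have hx : ∀ i : Fin a, e (x1, x2) (Fin.castAdd b i) = x1 i := by
    intro i
    simp [he, Equiv.sumArrowEquivProdArrow, Equiv.arrowCongr]
  have hx2 : ∀ i : Fin b, e (x1, x2) (Fin.natAdd a i) = x2 i := by
    intro i
    simp [he, Equiv.sumArrowEquivProdArrow, Equiv.arrowCongr]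
  have hcnt : ∀ j, cnt (e (x1, x2)) j = cnt x1 j + cnt x2 j := by
    intro j
    simp only [cnt, card_filter]
    rw [Fin.sum_univ_add]
    congr 1
    · exact Finset.sum_congr rfl fun i _ => by rw [hx i]
    · exact Finset.sum_congr rfl fun i _ => by rw [hx2 i]
  set q : Fin k → ℝ := fun j => (cnt (e (x1, x2)) j : ℝ) / ((a+b : ℕ) : ℝ) with hq
  have hqnn : ∀ j, 0 ≤ q j := fun j => by positivity
  have hq1 : ∑ j, q j ≤ 1 := by
    rw [hq, ← Finset.sum_div]
    rw [show ∑ j, (cnt (e (x1,x2)) j : ℝ) = (((a+b : ℕ)) : ℝ) by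
      rw [← Nat.cast_sum, cnt_sum]]
    rw [div_self (by positivity)]
  have h1 : ∏ j, q j ^ (cnt x1 j) ≤ ∏ j, ((cnt x1 j : ℝ) / a) ^ (cnt x1 j) :=
    ml_ineq q hqnn hq1 _ a (cnt_sum x1)
  have h2 : ∏ j, q j ^ (cnt x2 j) ≤ ∏ j, ((cnt x2 j : ℝ) / b) ^ (cnt x2 j) :=
    ml_ineq q hqnn hq1 _ b (cnt_sum x2)
  have hsplit : ∏ j, ((cnt (e (x1,x2)) j : ℝ) / ((a+b : ℕ) : ℝ)) ^ (cnt (e (x1,x2)) j)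
      = (∏ j, q j ^ (cnt x1 j)) * (∏ j, q j ^ (cnt x2 j)) := by
    rw [← Finset.prod_mul_distrib]
    refine Finset.prod_congr rfl fun j _ => ?_
    rw [← pow_add, ← hcnt j]
  rw [hsplit]
  exact mul_le_mul h1 h2 (Finset.prod_nonneg fun j _ => by positivity)
    (Finset.prod_nonneg fun j _ => by positivity)

lemma log_regret_sum {k : ℕ} (hk : 1 ≤ k) {β : Type*} (s : Finset β) (f : β → ℕ) :
    Real.log (regret k (∑ y ∈ s, f y)) ≤ ∑ y ∈ s, Real.log (regret k (f y)) := by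
  classical
  induction s using Finset.cons_induction with
  | empty => simp [regret_zero]
  | cons a s ha ih =>
    rw [Finset.sum_cons, Finset.sum_cons]
    have h1 : regret k (f a + ∑ y ∈ s, f y) ≤ regret k (f a) * regret k (∑ y ∈ s, f y) :=
      regret_superadd k _ _
    have hpos : ∀ m, (0:ℝ) < regret k m := fun m => lt_of_lt_of_le one_pos (one_le_regret hk m)
    calc Real.log (regret k (f a + ∑ y ∈ s, f y))
        ≤ Real.log (regret k (f a) * regret k (∑ y ∈ s, f y)) :=
          Real.log_le_log (hpos _) h1
      _ = Real.log (regret k (f a)) + Real.log (regret k (∑ y ∈ s, f y)) :=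
          Real.log_mul (hpos _).ne' (hpos _).ne'
      _ ≤ Real.log (regret k (f a)) + ∑ y ∈ s, Real.log (regret k (f y)) := by linarith

lemma Rf_mono {k : ℕ} (hk : 1 ≤ k) {n : ℕ} {𝒴 𝒵 : Type*}
    [Fintype 𝒴] [DecidableEq 𝒴] [Fintype 𝒵] [DecidableEq 𝒵]
    (Z : Fin n → 𝒵) (Y : Fin n → 𝒴) :
    Rf k Z ≤ Rf k (fun i => (Z i, Y i)) := by
  classical
  have hcount : ∀ z, #(univ.filter fun i => Z i = z)
      = ∑ y : 𝒴, #(univ.filter fun i => (Z i, Y i) = (z, y)) := by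
    intro z
    simp only [card_filter]
    rw [Finset.sum_comm]
    refine Finset.sum_congr rfl fun i _ => ?_
    rcases eq_or_ne (Z i) z with h | h
    · simp [Prod.ext_iff, h]
    · simp [Prod.ext_iff, h]
  calc Rf k Z = ∑ z : 𝒵, Real.log (regret k (∑ y : 𝒴, #(univ.filter fun i => (Z i, Y i) = (z, y)))) := by
        unfold Rf
        exact Finset.sum_congr rfl fun z _ => by rw [hcount z]
    _ ≤ ∑ z : 𝒵, ∑ y : 𝒴, Real.log (regret k (#(univ.filter fun i => (Z i, Y i) = (z, y)))) :=
        Finset.sum_le_sum fun z _ => log_regret_sum hk univ _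
    _ = Rf k (fun i => (Z i, Y i)) := by
        unfold Rf
        rw [Fintype.sum_prod_type]

lemma empEnt_comp_inj {n : ℕ} {α β : Type*} [Fintype α] [DecidableEq α]
    [Fintype β] [DecidableEq β] (f : α → β) (hf : Function.Injective f)
    (W : Fin n → α) : empEnt (fun i => f (W i)) = empEnt W := by
  classical
  unfold empEnt
  congr 1
  rw [← Finset.sum_subset (Finset.subset_univ ((univ : Finset α).image f))]
  · rw [Finset.sum_image (fun a _ b _ h => hf h)]
    refine Finset.sum_congr rfl fun a _ => ?_
    have hfil : (univ.filter fun i => f (W i) = f a) = (univ.filter fun i => W i = a) :=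
      Finset.filter_congr fun i _ => by simp [hf.eq_iff]
    rw [hfil]
  · intro b _ hb
    have : (univ.filter fun i => f (W i) = b) = ∅ := by
      apply Finset.filter_false_of_mem
      intro i _ hbi
      exact hb (Finset.mem_image.mpr ⟨W i, mem_univ _, hbi⟩)
    simp [this]

lemma Rf_fin_zero {α : Type*} [Fintype α] [DecidableEq α] (k : ℕ) (W : Fin 0 → α) :
    Rf k W = 0 := by
  unfold Rf
  simp [regret_zero]

end Regret

/-- Theorem 2: if the empirical conditional mutual information vanishes, then
`SCI_f(X;Y|Z) ≤ 0`. -/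
theorem SCIf_nonpos_of_empCMI_zero {n : ℕ} {𝒳 𝒴 𝒵 : Type*}
    [Fintype 𝒳] [DecidableEq 𝒳] [Fintype 𝒴] [DecidableEq 𝒴]
    [Fintype 𝒵] [DecidableEq 𝒵]
    (X : Fin n → 𝒳) (Y : Fin n → 𝒴) (Z : Fin n → 𝒵)
    (h : empCondEnt X Z - empCondEnt X (fun i => (Z i, Y i)) = 0) :
    max (Sf X Z - Sf X (fun i => (Z i, Y i)))
        (Sf Y Z - Sf Y (fun i => (Z i, X i))) ≤ 0 := by
  classical
  rcases Nat.eq_zero_or_pos n with rfl | hn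
  · -- n = 0 : everything vanishes
    simp only [Sf, Nat.cast_zero, zero_mul, zero_add]
    rw [Rf_fin_zero (Fintype.card 𝒳) Z, Rf_fin_zero (Fintype.card 𝒳) (fun i => (Z i, Y i)),
      Rf_fin_zero (Fintype.card 𝒴) Z, Rf_fin_zero (Fintype.card 𝒴) (fun i => (Z i, X i))]
    simp
  · have hkX : 1 ≤ Fintype.card 𝒳 :=
      Fintype.card_pos_iff.mpr ⟨X ⟨0, hn⟩⟩
    have hkY : 1 ≤ Fintype.card 𝒴 :=
      Fintype.card_pos_iff.mpr ⟨Y ⟨0, hn⟩⟩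
    -- symmetry of empirical CMI
    have e1 : empEnt (fun i => (Z i, X i)) = empEnt (fun i => (X i, Z i)) :=
      empEnt_comp_inj Prod.swap Prod.swap_injective (fun i => (X i, Z i))
    have e2 : empEnt (fun i => (Y i, Z i)) = empEnt (fun i => (Z i, Y i)) :=
      empEnt_comp_inj Prod.swap Prod.swap_injective (fun i => (Z i, Y i))
    have e3 : empEnt (fun i => (Y i, (Z i, X i))) = empEnt (fun i => (X i, (Z i, Y i))) := by
      have hf : Function.Injective
          (fun p : 𝒳 × (𝒵 × 𝒴) => ((p.2.2, (p.2.1, p.1)) : 𝒴 × (𝒵 × 𝒳))) := by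
        rintro ⟨x, z, y⟩ ⟨x', z', y'⟩ hp
        simp only [Prod.mk.injEq] at hp
        simp [Prod.ext_iff, hp.1, hp.2.1, hp.2.2]
      exact empEnt_comp_inj _ hf (fun i => (X i, (Z i, Y i)))
    have h' : empCondEnt Y Z - empCondEnt Y (fun i => (Z i, X i)) = 0 := by
      simp only [empCondEnt] at h ⊢
      linarith [e1, e2, e3, h]
    apply max_le
    · have hRf := Rf_mono (k := Fintype.card 𝒳) hkX Z Y
      simp only [Sf]
      have h0 : empCondEnt X Z = empCondEnt X (fun i => (Z i, Y i)) := by linarith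
      rw [h0]
      linarith
    · have hRf := Rf_mono (k := Fintype.card 𝒴) hkY Z X
      simp only [Sf]
      have h0 : empCondEnt Y Z = empCondEnt Y (fun i => (Z i, X i)) := by linarith
      rw [h0]
      linarith
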